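/- Let L, K be positive integers, let π'* ∈ Δ^{L-1} (open simplex), and let φ* be an L×K matrix whose rows lie in the open simplex Δ^{K-1} and which has rank L. Let p* = φ*^T π'* ∈ Δ^{K-1}. Then the cross-entropy function h(π') = Σ_{k=1}^K p*_k log((φ*^T π')_k), defined on the closed simplex Δ̄^{L-1} with values in [−∞, ∞) under the convention log 0 = −∞, attains its maximum uniquely at π' = π'*: h(π') ≤ h(π'*) for all π' ∈ Δ̄^{L-1}, with equality if and only if π' = π'*. -/

import Mathlib

open Finset

/-- The open simplex: vectors with strictly positive entries summing to 1. -/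
def openSimplex {n : ℕ} (v : Fin n → ℝ) : Prop :=
  (∀ i, 0 < v i) ∧ ∑ i, v i = 1

/-- The closed simplex: vectors with nonnegative entries summing to 1. -/
def closedSimplex {n : ℕ} (v : Fin n → ℝ) : Prop :=
  (∀ i, 0 ≤ v i) ∧ ∑ i, v i = 1

/-- Extended-real logarithm with the convention `log 0 = -∞`. -/
noncomputable def elog (x : ℝ) : EReal :=
  if x = 0 then ⊥ else ((Real.log x : ℝ) : EReal)

/-- The cross-entropy `h(π') = Σ_k p*_k log((φ*ᵀ π')_k)` with `p* = φ*ᵀ π'*`,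
valued in the extended reals with `log 0 = -∞`. -/
noncomputable def crossEntropy (L K : ℕ)
    (π'star : Fin L → ℝ) (φstar : Fin L → Fin K → ℝ) (π' : Fin L → ℝ) : EReal :=
  ∑ k, ((∑ l, φstar l k * π'star l : ℝ) : EReal) * elog (∑ l, φstar l k * π' l)

/-!
With `p = φ*ᵀ π'*` and `q = φ*ᵀ π'`, both probability vectors on `Fin K` with `p > 0`,
`h(π') = Σ p_k log q_k`. If some `q_k` vanishes then `h(π') = -∞ < h(π'*)`; otherwise
`p log q - p log p ≤ q - p` (from `log x ≤ x - 1`, strict unless `x = 1`) summed over `k` is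
Gibbs' inequality `Σ p log q < Σ p log p` for `q ≠ p`. Full row rank of `φ*` makes
`π' ↦ φ*ᵀ π'` injective, so `q ≠ p` whenever `π' ≠ π'*`.
-/

open Matrix Real

theorem EReal.coe_finset_sum {ι : Type*} (s : Finset ι) (f : ι → ℝ) :
    ((∑ i ∈ s, f i : ℝ) : EReal) = ∑ i ∈ s, (f i : EReal) :=
  map_sum ({ toFun := (↑), map_zero' := rfl, map_add' := EReal.coe_add } : ℝ →+ EReal) f s

lemma elog_of_ne_zero {x : ℝ} (hx : x ≠ 0) : elog x = log x := if_neg hx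

lemma elog_zero : elog 0 = ⊥ := if_pos rfl

lemma mul_log_sub_mul_log_lt {p q : ℝ} (hp : 0 < p) (hq : 0 < q) (hne : q ≠ p) :
    p * log q - p * log p < q - p := by
  have hlog : log (q / p) < q / p - 1 :=
    log_lt_sub_one_of_pos (div_pos hq hp) (by rwa [ne_eq, div_eq_one_iff_eq hp.ne'])
  calc p * log q - p * log p = p * log (q / p) := by rw [log_div hq.ne' hp.ne']; ring
    _ < p * (q / p - 1) := mul_lt_mul_of_pos_left hlog hp
    _ = q - p := by field_simp

lemma mul_log_sub_mul_log_le {p q : ℝ} (hp : 0 < p) (hq : 0 < q) :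
    p * log q - p * log p ≤ q - p := by
  rcases eq_or_ne q p with rfl | hne
  · simp
  · exact (mul_log_sub_mul_log_lt hp hq hne).le

section Gibbs

variable {ι : Type*} [Fintype ι] {p q : ι → ℝ}

theorem sum_mul_log_lt_sum_mul_log (hp : ∀ i, 0 < p i) (hq : ∀ i, 0 < q i)
    (hsum : ∑ i, q i = ∑ i, p i) (hne : q ≠ p) :
    ∑ i, p i * log (q i) < ∑ i, p i * log (p i) := by
  obtain ⟨i, hi⟩ := Function.ne_iff.mp hne
  have key := Finset.sum_lt_sum (fun j _ => mul_log_sub_mul_log_le (hp j) (hq j))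
    ⟨i, mem_univ i, mul_log_sub_mul_log_lt (hp i) (hq i) hi⟩
  rw [sum_sub_distrib, sum_sub_distrib, hsum, sub_self] at key
  linarith

lemma sum_coe_mul_elog_of_pos (hq : ∀ i, 0 < q i) :
    ∑ i, (p i : EReal) * elog (q i) = ((∑ i, p i * log (q i) : ℝ) : EReal) := by
  rw [EReal.coe_finset_sum]
  refine sum_congr rfl fun i _ => ?_
  rw [elog_of_ne_zero (hq i).ne', EReal.coe_mul]

lemma sum_coe_mul_elog_eq_bot {i : ι} (hp : 0 < p i) (hq : q i = 0) :
    ∑ i, (p i : EReal) * elog (q i) = ⊥ := by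
  classical
  rw [← add_sum_erase _ _ (mem_univ i), hq, elog_zero, EReal.coe_mul_bot_of_pos hp,
    EReal.bot_add]

theorem sum_coe_mul_elog_lt_sum_coe_mul_elog (hp : ∀ i, 0 < p i) (hq : ∀ i, 0 ≤ q i)
    (hsum : ∑ i, q i = ∑ i, p i) (hne : q ≠ p) :
    ∑ i, (p i : EReal) * elog (q i) < ∑ i, (p i : EReal) * elog (p i) := by
  rw [sum_coe_mul_elog_of_pos hp]
  by_cases hpos : ∀ i, 0 < q i
  · rw [sum_coe_mul_elog_of_pos hpos]
    exact_mod_cast sum_mul_log_lt_sum_mul_log hp hpos hsum hne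
  · obtain ⟨i, hi⟩ := not_forall.mp hpos
    rw [sum_coe_mul_elog_eq_bot (hp i) (le_antisymm (not_lt.mp hi) (hq i))]
    exact EReal.bot_lt_coe _

end Gibbs

theorem Matrix.vecMul_injective_of_rank_eq_card {m n R : Type*} [Field R] [Fintype m]
    [Fintype n] {A : Matrix m n R} (h : A.rank = Fintype.card m) :
    Function.Injective fun v => v ᵥ* A :=
  vecMul_injective_iff.mpr <| linearIndependent_iff_card_eq_finrank_span.mpr <|
    h.symm.trans A.rank_eq_finrank_span_row

theorem Matrix.sum_vecMul_of_sum_row_eq_one {m n α : Type*} [Fintype m] [Fintype n]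
    [CommSemiring α] {A : Matrix m n α} (hA : ∀ i, ∑ j, A i j = 1) (x : m → α) :
    ∑ j, (x ᵥ* A) j = ∑ i, x i := by
  simp only [vecMul, dotProduct]
  rw [sum_comm]
  simp [← mul_sum, hA]

lemma openSimplex.closedSimplex {n : ℕ} {v : Fin n → ℝ} (hv : openSimplex v) :
    closedSimplex v :=
  ⟨fun i => (hv.1 i).le, hv.2⟩

section Mixture

variable {L K : ℕ} {w : Fin L → ℝ} {φ : Fin L → Fin K → ℝ}

lemma closedSimplex_vecMul (hw : closedSimplex w) (hφ : ∀ l, closedSimplex (φ l)) :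
    closedSimplex (w ᵥ* of φ) :=
  ⟨fun k => show 0 ≤ ∑ l, w l * φ l k from
      sum_nonneg fun l _ => mul_nonneg (hw.1 l) ((hφ l).1 k),
    (sum_vecMul_of_sum_row_eq_one (fun l => (hφ l).2) w).trans hw.2⟩

lemma openSimplex_vecMul (hw : closedSimplex w) (hφ : ∀ l, openSimplex (φ l)) :
    openSimplex (w ᵥ* of φ) := by
  refine ⟨fun k => ?_, (closedSimplex_vecMul hw fun l => (hφ l).closedSimplex).2⟩
  obtain ⟨l, -, hl⟩ := exists_ne_zero_of_sum_ne_zero (hw.2.trans_ne one_ne_zero)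
  exact sum_pos' (fun l _ => mul_nonneg (hw.1 l) ((hφ l).1 k).le)
    ⟨l, mem_univ l, mul_pos ((hw.1 l).lt_of_ne' hl) ((hφ l).1 k)⟩

end Mixture

lemma crossEntropy_eq_sum_vecMul (L K : ℕ) (π'star : Fin L → ℝ)
    (φstar : Fin L → Fin K → ℝ) (π' : Fin L → ℝ) :
    crossEntropy L K π'star φstar π' =
      ∑ k, ((π'star ᵥ* of φstar) k : EReal) * elog ((π' ᵥ* of φstar) k) := by
  simp only [crossEntropy, vecMul, dotProduct, of_apply, mul_comm]

theorem cross_entropy_unique_max_general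
    (L K : ℕ)
    (π'star : Fin L → ℝ) (φstar : Fin L → Fin K → ℝ)
    (hπ' : openSimplex π'star) (hφ : ∀ l, openSimplex (φstar l))
    (hrank : (Matrix.of φstar).rank = L) :
    ∀ π' : Fin L → ℝ, closedSimplex π' →
      crossEntropy L K π'star φstar π' ≤ crossEntropy L K π'star φstar π'star ∧
      (crossEntropy L K π'star φstar π' = crossEntropy L K π'star φstar π'star ↔
        π' = π'star) := by
  intro π' hπ
  have hp := openSimplex_vecMul hπ'.closedSimplex hφ
  have hq := closedSimplex_vecMul hπ fun l => (hφ l).closedSimplex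
  have hinj : Function.Injective fun v => v ᵥ* of φstar :=
    vecMul_injective_of_rank_eq_card (by rwa [Fintype.card_fin])
  rcases eq_or_ne π' π'star with rfl | hne
  · simp
  have hlt : crossEntropy L K π'star φstar π' < crossEntropy L K π'star φstar π'star := by
    simp only [crossEntropy_eq_sum_vecMul]
    exact sum_coe_mul_elog_lt_sum_coe_mul_elog hp.1 hq.1 (hq.2.trans hp.2.symm) (hinj.ne hne)
  exact ⟨hlt.le, iff_of_false hlt.ne hne⟩

/-- With `π'*` in the open simplex and `φ*` row-wise in the open simplex of
rank `L`, the cross-entropy `h(π') = Σ_k p*_k log((φ*ᵀ π')_k)`, `p* = φ*ᵀ π'*`, attains its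
maximum over the closed simplex uniquely at `π' = π'*`. -/
theorem cross_entropy_unique_max
    (L K : ℕ) (hL : 0 < L) (hK : 0 < K)
    (π'star : Fin L → ℝ) (φstar : Fin L → Fin K → ℝ)
    (hπ' : openSimplex π'star) (hφ : ∀ l, openSimplex (φstar l))
    (hrank : (Matrix.of φstar).rank = L) :
    ∀ π' : Fin L → ℝ, closedSimplex π' →
      crossEntropy L K π'star φstar π' ≤ crossEntropy L K π'star φstar π'star ∧
      (crossEntropy L K π'star φstar π' = crossEntropy L K π'star φstar π'star ↔
        π' = π'star) :=
  cross_entropy_unique_max_general L K π'star φstar hπ' hφ hrank
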